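/- Let e(G) and o(G) denote the numbers of independent sets of even and odd cardinality of a graph G, respectively (the empty set counts as even). Then for wheels: e(W_{3n+1}) − o(W_{3n+1}) = 2(−1)^n − 1 for every integer n ≥ 1, e(W_{3n}) − o(W_{3n}) = (−1)^n − 1 for every integer n ≥ 2, and e(W_{3n+2}) − o(W_{3n+2}) = (−1)^n − 1 for every integer n ≥ 1. -/

import Mathlib

/-- A finset of vertices is independent if no two of its members are adjacent. -/
def IsIndep {V : Type*} (G : SimpleGraph V) (s : Finset V) : Prop :=
  ∀ u ∈ s, ∀ v ∈ s, ¬ G.Adj u v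


/-- The number of independent sets of even cardinality minus the number of independent sets of
odd cardinality, i.e. the value of the independence polynomial at -1. -/
noncomputable def evenOddDiff {V : Type*} (G : SimpleGraph V) : ℤ :=
  (Nat.card {s : Finset V // IsIndep G s ∧ Even s.card} : ℤ) -
    (Nat.card {s : Finset V // IsIndep G s ∧ Odd s.card} : ℤ)


/-- The wheel graph with one hub vertex (`none`) joined to every vertex of a cycle on `m`
vertices; it has `m + 1` vertices in total. -/
def wheelGraph (m : ℕ) : SimpleGraph (Option (Fin m)) where
  Adj a b := a ≠ b ∧ (a = none ∨ b = none ∨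
    ∃ i j, a = some i ∧ b = some j ∧ (SimpleGraph.cycleGraph m).Adj i j)
  symm := by
    constructor
    rintro a b ⟨hne, h⟩
    refine ⟨hne.symm, ?_⟩
    rcases h with h | h | ⟨i, j, hi, hj, hadj⟩
    · exact Or.inr (Or.inl h)
    · exact Or.inl h
    · exact Or.inr (Or.inr ⟨j, i, hj, hi, hadj.symm⟩)
  loopless := by
    constructor
    rintro a ⟨hne, _⟩
    exact hne rfl


/-! Write `I(s)` for the independence polynomial at `-1` of the subgraph induced on a vertex set
`s`. Sorting the independent subsets of `s ∪ {v}` by whether they contain `v` gives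
`I(s ∪ {v}) = I(s) - I(s \ N(v))`. The hub of a wheel is adjacent to every other vertex, so
`I(W) = I(C) - 1` for its rim `C`; deleting a vertex of the cycle `C_{k+3}` leaves the paths
`P_{k+2}` and `P_k`; and on paths the recursion `I(P_{n+2}) = I(P_{n+1}) - I(P_n)` gives
`I(P_{n+3}) = -I(P_n)`, i.e. the values `(-1)^k, 0, -(-1)^k` on `P_{3k}, P_{3k+1}, P_{3k+2}`. -/

open Finset SimpleGraph

variable {V W : Type*}

lemma isIndep_insert [DecidableEq V] {G : SimpleGraph V} {v : V} {t : Finset V} :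
    IsIndep G (insert v t) ↔ IsIndep G t ∧ ∀ w ∈ t, ¬G.Adj v w := by
  constructor
  · intro h
    exact ⟨fun a ha b hb => h a (mem_insert_of_mem ha) b (mem_insert_of_mem hb),
      fun w hw => h v (mem_insert_self v t) w (mem_insert_of_mem hw)⟩
  · rintro ⟨ht, hv⟩ a ha b hb hab
    rcases mem_insert.1 ha with rfl | hat <;> rcases mem_insert.1 hb with rfl | hbt
    · exact G.irrefl hab
    · exact hv b hbt hab
    · exact hv a hat hab.symm
    · exact ht a hat b hbt hab

open Classical in
/-- `I(G[s]; -1)`: the independence polynomial of the subgraph induced on `s`, evaluated at `-1`. -/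
noncomputable def indepPolyAtNegOne (G : SimpleGraph V) (s : Finset V) : ℤ :=
  ∑ t ∈ s.powerset, if IsIndep G t then (-1) ^ t.card else 0

lemma evenOddDiff_eq_indepPolyAtNegOne [Fintype V] (G : SimpleGraph V) :
    evenOddDiff G = indepPolyAtNegOne G univ := by
  classical
  rw [evenOddDiff, indepPolyAtNegOne, ← sum_filter, powerset_univ,
    ← sum_filter_add_sum_filter_not _ (fun t => Even t.card), filter_filter, filter_filter,
    sum_congr rfl fun t ht => (mem_filter.1 ht).2.2.neg_one_pow,
    sum_congr rfl fun t ht => (Nat.not_even_iff_odd.1 (mem_filter.1 ht).2.2).neg_one_pow]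
  simp [Nat.card_eq_fintype_card, Fintype.card_subtype, Nat.not_even_iff_odd, sub_eq_add_neg]

lemma indepPolyAtNegOne_empty (G : SimpleGraph V) : indepPolyAtNegOne G ∅ = 1 := by
  simp [indepPolyAtNegOne, IsIndep]

lemma indepPolyAtNegOne_insert [DecidableEq V] {G : SimpleGraph V} [DecidableRel G.Adj] {v : V}
    {s : Finset V} (hv : v ∉ s) :
    indepPolyAtNegOne G (insert v s) =
      indepPolyAtNegOne G s - indepPolyAtNegOne G {w ∈ s | ¬G.Adj v w} := by
  simp only [indepPolyAtNegOne]
  rw [sum_powerset_insert hv, sub_eq_add_neg]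
  congr 1
  have hN : {w ∈ s | ¬G.Adj v w}.powerset = {t ∈ s.powerset | ∀ w ∈ t, ¬G.Adj v w} := by
    ext t
    simp only [mem_powerset, mem_filter, subset_iff]
    grind
  rw [hN, sum_filter, ← sum_neg_distrib]
  refine sum_congr rfl fun t ht => ?_
  have hvt : v ∉ t := fun h => hv (mem_powerset.1 ht h)
  rw [isIndep_insert, card_insert_of_notMem hvt, pow_succ]
  split_ifs <;> simp_all

lemma indepPolyAtNegOne_image [DecidableEq W] {G : SimpleGraph V} {H : SimpleGraph W}
    {s : Finset V} {e : V → W} (he : Set.InjOn e s)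
    (hadj : ∀ a ∈ s, ∀ b ∈ s, H.Adj (e a) (e b) ↔ G.Adj a b) :
    indepPolyAtNegOne H (s.image e) = indepPolyAtNegOne G s := by
  rw [indepPolyAtNegOne, powerset_image, sum_image]
  · refine sum_congr rfl fun t ht => ?_
    have hts := mem_powerset.1 ht
    have hindep : IsIndep H (t.image e) ↔ IsIndep G t := by
      simp only [IsIndep, forall_mem_image]
      exact forall₂_congr fun a ha => forall₂_congr fun b hb =>
        not_congr (hadj a (hts ha) b (hts hb))
    rw [hindep, card_image_of_injOn (he.mono hts)]
  · intro t ht u hu htu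
    rw [mem_coe, mem_powerset] at ht hu
    exact coe_injective ((he.image_eq_image_iff (coe_subset.2 ht) (coe_subset.2 hu)).1
      (by rw [← coe_image, ← coe_image]; exact congrArg _ htu))

-- The path `P_n` is modelled as `range n` in `hasse ℕ`, the graph joining each `i` to `i + 1`.

lemma indepPolyAtNegOne_hasse_image_add (c : ℕ) (s : Finset ℕ) :
    indepPolyAtNegOne (hasse ℕ) (s.image (· + c)) = indepPolyAtNegOne (hasse ℕ) s :=
  indepPolyAtNegOne_image (add_left_injective c).injOn fun a _ b _ => by
    simp only [hasse_adj, Nat.covBy_iff_add_one_eq]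
    omega

lemma indepPolyAtNegOne_hasse_range_add_two (n : ℕ) :
    indepPolyAtNegOne (hasse ℕ) (range (n + 2)) =
      indepPolyAtNegOne (hasse ℕ) (range (n + 1)) - indepPolyAtNegOne (hasse ℕ) (range n) := by
  classical
  rw [range_add_one (n := n + 1), indepPolyAtNegOne_insert notMem_range_self]
  congr 2
  ext w
  simp only [mem_filter, mem_range, hasse_adj, Nat.covBy_iff_add_one_eq]
  omega

lemma indepPolyAtNegOne_hasse_range_add_three (n : ℕ) :
    indepPolyAtNegOne (hasse ℕ) (range (n + 3)) = -indepPolyAtNegOne (hasse ℕ) (range n) := by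
  have h₁ := indepPolyAtNegOne_hasse_range_add_two (n + 1)
  have h₂ := indepPolyAtNegOne_hasse_range_add_two n
  rw [show n + 1 + 2 = n + 3 from rfl] at h₁
  linarith

lemma indepPolyAtNegOne_hasse_range_three_mul (k : ℕ) :
    indepPolyAtNegOne (hasse ℕ) (range (3 * k)) = (-1) ^ k := by
  induction k with
  | zero => exact indepPolyAtNegOne_empty _
  | succ k ih =>
    rw [Nat.mul_succ, indepPolyAtNegOne_hasse_range_add_three, ih, pow_succ, mul_neg_one]

lemma indepPolyAtNegOne_hasse_range_three_mul_add_one (k : ℕ) :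
    indepPolyAtNegOne (hasse ℕ) (range (3 * k + 1)) = 0 := by
  induction k with
  | zero =>
    classical
    rw [Nat.mul_zero, range_one, ← insert_empty, indepPolyAtNegOne_insert (notMem_empty 0),
      filter_empty, sub_self]
  | succ k ih =>
    rw [show 3 * (k + 1) + 1 = 3 * k + 1 + 3 by ring, indepPolyAtNegOne_hasse_range_add_three, ih,
      neg_zero]

lemma indepPolyAtNegOne_hasse_range_three_mul_add_two (k : ℕ) :
    indepPolyAtNegOne (hasse ℕ) (range (3 * k + 2)) = -(-1) ^ k := by
  rw [indepPolyAtNegOne_hasse_range_add_two, indepPolyAtNegOne_hasse_range_three_mul_add_one,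
    indepPolyAtNegOne_hasse_range_three_mul, zero_sub]

lemma cycleGraph_adj_iff_val {n : ℕ} {a b : Fin (n + 2)} :
    (cycleGraph (n + 2)).Adj a b ↔ a.val + 1 = b.val ∨ b.val + 1 = a.val ∨
      (a.val = 0 ∧ b.val = n + 1) ∨ (b.val = 0 ∧ a.val = n + 1) := by
  have ha := a.isLt
  have hb := b.isLt
  rw [cycleGraph_adj', ← Nat.cast_inj (R := ℤ), ← Nat.cast_inj (R := ℤ),
    Fin.intCast_val_sub_eq_sub_add_ite, Fin.intCast_val_sub_eq_sub_add_ite]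
  simp only [Fin.le_def]
  split_ifs <;> omega

lemma indepPolyAtNegOne_cycleGraph (k : ℕ) :
    indepPolyAtNegOne (cycleGraph (k + 3)) univ =
      indepPolyAtNegOne (hasse ℕ) (range (k + 2)) - indepPolyAtNegOne (hasse ℕ) (range k) := by
  have hpath : ∀ s : Finset (Fin (k + 3)), Fin.last (k + 2) ∉ s →
      indepPolyAtNegOne (hasse ℕ) (s.image Fin.val) = indepPolyAtNegOne (cycleGraph (k + 3)) s :=
    fun s hs => indepPolyAtNegOne_image Fin.val_injective.injOn fun a ha b hb => by
      have ha' : a.val ≠ k + 2 := fun h => hs (Fin.ext (b := Fin.last _) h ▸ ha)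
      have hb' : b.val ≠ k + 2 := fun h => hs (Fin.ext (b := Fin.last _) h ▸ hb)
      rw [hasse_adj, Nat.covBy_iff_add_one_eq, Nat.covBy_iff_add_one_eq, cycleGraph_adj_iff_val]
      omega
  rw [← insert_erase (mem_univ (Fin.last (k + 2))), indepPolyAtNegOne_insert (notMem_erase _ _),
    ← hpath _ (notMem_erase _ _), ← hpath _ (fun h => notMem_erase _ _ (mem_filter.1 h).1),
    ← indepPolyAtNegOne_hasse_image_add 1 (range k)]
  congr 2
  · ext x
    simp [Fin.ext_iff, Fin.exists_iff]
    omega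
  · ext x
    simp only [mem_image, mem_filter, mem_erase, mem_univ, mem_range, Fin.exists_iff, ne_eq,
      Fin.ext_iff, cycleGraph_adj_iff_val, Fin.val_last, and_true]
    constructor
    · rintro ⟨i, hik, ⟨hi, hadj⟩, rfl⟩
      exact ⟨i - 1, by omega, by omega⟩
    · rintro ⟨i, hi, rfl⟩
      exact ⟨i + 1, by omega, ⟨by omega, by omega⟩, rfl⟩

lemma wheelGraph_adj_some {m : ℕ} {i j : Fin m} :
    (wheelGraph m).Adj (some i) (some j) ↔ (cycleGraph m).Adj i j := by
  simp only [wheelGraph, ne_eq, Option.some.injEq, reduceCtorEq, exists_and_left,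
    exists_eq_left', false_or]
  exact and_iff_right_of_imp Adj.ne

lemma wheelGraph_adj_none_some {m : ℕ} (i : Fin m) : (wheelGraph m).Adj none (some i) :=
  ⟨(Option.some_ne_none i).symm, Or.inl rfl⟩

lemma evenOddDiff_wheelGraph (m : ℕ) :
    evenOddDiff (wheelGraph m) = indepPolyAtNegOne (cycleGraph m) univ - 1 := by
  classical
  have huniv : (univ : Finset (Option (Fin m))) = insert none (univ.image some) := by
    ext a
    cases a <;> simp
  rw [evenOddDiff_eq_indepPolyAtNegOne, huniv, indepPolyAtNegOne_insert (by simp),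
    filter_eq_empty_iff.2 ?_, indepPolyAtNegOne_empty,
    indepPolyAtNegOne_image (Option.some_injective _).injOn fun _ _ _ _ => wheelGraph_adj_some]
  simp only [mem_image, mem_univ, true_and, not_not, forall_exists_index, forall_apply_eq_imp_iff]
  exact wheelGraph_adj_none_some

theorem wheel_evenOddDiff :
    (∀ n : ℕ, 1 ≤ n → evenOddDiff (wheelGraph (3 * n)) = 2 * (-1) ^ n - 1) ∧
    (∀ n : ℕ, 2 ≤ n → evenOddDiff (wheelGraph (3 * n - 1)) = (-1) ^ n - 1) ∧
    (∀ n : ℕ, 1 ≤ n → evenOddDiff (wheelGraph (3 * n + 1)) = (-1) ^ n - 1) := by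
  have hwheel (k : ℕ) : evenOddDiff (wheelGraph (k + 3)) =
      indepPolyAtNegOne (hasse ℕ) (range (k + 2)) -
        indepPolyAtNegOne (hasse ℕ) (range k) - 1 := by
    rw [evenOddDiff_wheelGraph, indepPolyAtNegOne_cycleGraph]
  refine ⟨fun n hn => ?_, fun n hn => ?_, fun n hn => ?_⟩
  · obtain ⟨k, rfl⟩ := Nat.exists_eq_add_of_le' hn
    rw [show 3 * (k + 1) = 3 * k + 3 by ring, hwheel,
      indepPolyAtNegOne_hasse_range_three_mul_add_two, indepPolyAtNegOne_hasse_range_three_mul,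
      pow_succ]
    ring
  · obtain ⟨k, rfl⟩ := Nat.exists_eq_add_of_le' hn
    rw [show 3 * (k + 2) - 1 = 3 * k + 2 + 3 by omega, hwheel,
      show 3 * k + 2 + 2 = 3 * (k + 1) + 1 by ring,
      indepPolyAtNegOne_hasse_range_three_mul_add_one,
      indepPolyAtNegOne_hasse_range_three_mul_add_two, pow_add]
    ring
  · obtain ⟨k, rfl⟩ := Nat.exists_eq_add_of_le' hn
    rw [show 3 * (k + 1) + 1 = 3 * k + 1 + 3 by ring, hwheel,
      show 3 * k + 1 + 2 = 3 * (k + 1) by ring, indepPolyAtNegOne_hasse_range_three_mul,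
      indepPolyAtNegOne_hasse_range_three_mul_add_one]
    ring
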